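/- Let Θ(·;λ) be an arbitrary threshold function and let P be any penalty associated with Θ through the penalty construction. Then for any y ∈ ℝ^n, β̂ = vecΘ(y;λ) is a global minimizer of the problem min over β ∈ ℝ^n of (1/2)‖y − β‖₂² + P(‖β‖₂; λ). -/

import Mathlib

open MeasureTheory Matrix Filter
open scoped ENNReal NNReal BigOperators

noncomputable section

namespace RRRStmt

/-- Squared Frobenius norm `‖A‖_F²`. -/
def froSq {n m : ℕ} (A : Matrix (Fin n) (Fin m) ℝ) : ℝ := ∑ i, ∑ j, (A i j) ^ 2

/-- Frobenius norm `‖A‖_F`. -/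
def fro {n m : ℕ} (A : Matrix (Fin n) (Fin m) ℝ) : ℝ := Real.sqrt (froSq A)

/-- ℓ₂ norm of the `i`-th row of `A`. -/
def rowNorm {n m : ℕ} (A : Matrix (Fin n) (Fin m) ℝ) (i : Fin n) : ℝ :=
  Real.sqrt (∑ j, (A i j) ^ 2)

open Classical in
/-- Number of nonzero rows, `‖A‖_{2,0}`. -/
def numNZRows {n m : ℕ} (A : Matrix (Fin n) (Fin m) ℝ) : ℕ :=
  (Finset.univ.filter fun i => A i ≠ 0).card

open Classical in
/-- Row support of `A`: indices of nonzero rows. -/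
def rowSupp {n m : ℕ} (A : Matrix (Fin n) (Fin m) ℝ) : Finset (Fin n) :=
  Finset.univ.filter fun i => A i ≠ 0

open Classical in
/-- Number of entries at which two matrices differ, `‖A - B‖₀`. -/
def numDiff {n m : ℕ} (A B : Matrix (Fin n) (Fin m) ℝ) : ℕ :=
  (Finset.univ.filter fun q : Fin n × Fin m => A q.1 q.2 ≠ B q.1 q.2).card

/-- A threshold function `Θ(t; λ)`: odd, nondecreasing in `t`, tending to `∞`, and with
`0 ≤ Θ(t;λ) ≤ t` for `t ≥ 0`. -/
def IsThresholdFun (Θ : ℝ → ℝ → ℝ) : Prop :=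
  (∀ t lam : ℝ, 0 ≤ lam → Θ (-t) lam = -Θ t lam) ∧
  (∀ t t' lam : ℝ, 0 ≤ lam → t ≤ t' → Θ t lam ≤ Θ t' lam) ∧
  (∀ lam : ℝ, 0 ≤ lam → Tendsto (fun t => Θ t lam) atTop atTop) ∧
  (∀ t lam : ℝ, 0 ≤ lam → 0 ≤ t → 0 ≤ Θ t lam ∧ Θ t lam ≤ t)

/-- `Θ⁻¹(u;λ) = sup {s : Θ(s;λ) ≤ u}`. -/
def ThetaInv (Θ : ℝ → ℝ → ℝ) (lam u : ℝ) : ℝ := sSup {s : ℝ | Θ s lam ≤ u}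

/-- `P_Θ(t;λ) = ∫₀^{|t|} (Θ⁻¹(u;λ) - u) du`. -/
def PTheta (Θ : ℝ → ℝ → ℝ) (t lam : ℝ) : ℝ := ∫ u in (0:ℝ)..|t|, (ThetaInv Θ lam u - u)

/-- The penalty `P` is associated with the threshold `Θ` through the penalty construction:
`P(t;λ) - P(0;λ) = P_Θ(t;λ) + q(t;λ)` for some nonnegative `q` vanishing on the range of `Θ`. -/
def IsPenaltyFor (Θ P : ℝ → ℝ → ℝ) : Prop :=
  ∃ q : ℝ → ℝ → ℝ, (∀ t lam : ℝ, 0 ≤ lam → 0 ≤ q t lam) ∧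
    (∀ s lam : ℝ, 0 ≤ lam → q (Θ s lam) lam = 0) ∧
    (∀ t lam : ℝ, 0 ≤ lam → P t lam - P 0 lam = PTheta Θ t lam + q t lam)

/-- Euclidean norm of a vector. -/
def vnorm {m : ℕ} (a : Fin m → ℝ) : ℝ := Real.sqrt (∑ j, (a j) ^ 2)

open Classical in
/-- Multivariate thresholding `vecΘ(a;λ) = a·Θ(‖a‖₂;λ)/‖a‖₂` (and `0` at `0`). -/
def vecTheta (Θ : ℝ → ℝ → ℝ) (lam : ℝ) {m : ℕ} (a : Fin m → ℝ) : Fin m → ℝ :=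
  if a = 0 then 0 else (Θ (vnorm a) lam / vnorm a) • a

/-- Row-wise multivariate thresholding of a matrix. -/
def matTheta (Θ : ℝ → ℝ → ℝ) (lam : ℝ) {n m : ℕ} (A : Matrix (Fin n) (Fin m) ℝ) :
    Matrix (Fin n) (Fin m) ℝ :=
  Matrix.of fun i => vecTheta Θ lam (A i)

/-- Hard-thresholding penalty `P_H(t;λ)`. -/
def PH (t lam : ℝ) : ℝ := if |t| < lam then -t ^ 2 / 2 + lam * |t| else lam ^ 2 / 2

/-- Law of an `n × m` noise matrix with i.i.d. `N(0, σ²)` entries. -/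
def gaussianNoise (n m : ℕ) (σ : ℝ) : Measure (Fin n → Fin m → ℝ) :=
  Measure.pi fun _ => Measure.pi fun _ => ProbabilityTheory.gaussianReal 0 (Real.toNNReal (σ ^ 2))

/-- Robust loss `ρ(t;λ) = ∫₀^{|t|} (u - Θ(u;λ)) du`. -/
def rho (Θ : ℝ → ℝ → ℝ) (lam t : ℝ) : ℝ := ∫ u in (0:ℝ)..|t|, (u - Θ u lam)

/-!
Write `z = ‖y‖₂`, `r = ‖β‖₂` and `θ = Θ(z;λ)`. Since `vecΘ(y;λ)` is the multiple `(θ/z) y` of `y`,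
its objective value is `½(z - θ)² + P(θ;λ)`, while the reverse triangle inequality bounds that of `β`
below by `½(z - r)² + P(r;λ)`. As `q ≥ 0` with `q(θ;λ) = 0`, it remains to compare
`½(z - ·)² + P_Θ(·;λ)` at `θ` and at `r`; the difference is `∫_θ^r (Θ⁻¹(u;λ) - z) du`, and it is
nonnegative because `Θ⁻¹(u;λ) ≥ z` for `u ≥ θ` and `Θ⁻¹(u;λ) ≤ z` for `0 ≤ u < θ`.
-/

namespace IsThresholdFun

variable {Θ : ℝ → ℝ → ℝ} {lam : ℝ}

lemma map_zero (hΘ : IsThresholdFun Θ) (hlam : 0 ≤ lam) : Θ 0 lam = 0 := by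
  have h := hΘ.1 0 lam hlam
  rw [neg_zero] at h
  linarith

lemma bddAbove_setOf_le (hΘ : IsThresholdFun Θ) (hlam : 0 ≤ lam) (u : ℝ) :
    BddAbove {s : ℝ | Θ s lam ≤ u} := by
  obtain ⟨T, hT⟩ := ((hΘ.2.2.1 lam hlam).eventually_gt_atTop u).exists_forall_of_atTop
  exact ⟨T, fun s hs => not_lt.1 fun hTs => (hT s hTs.le).not_ge hs⟩

lemma nonempty_setOf_le (hΘ : IsThresholdFun Θ) (hlam : 0 ≤ lam) {u : ℝ} (hu : 0 ≤ u) :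
    {s : ℝ | Θ s lam ≤ u}.Nonempty :=
  ⟨0, by simpa [hΘ.map_zero hlam] using hu⟩

lemma le_thetaInv (hΘ : IsThresholdFun Θ) (hlam : 0 ≤ lam) {z u : ℝ} (h : Θ z lam ≤ u) :
    z ≤ ThetaInv Θ lam u :=
  le_csSup (hΘ.bddAbove_setOf_le hlam u) h

lemma thetaInv_le (hΘ : IsThresholdFun Θ) (hlam : 0 ≤ lam) {z u : ℝ} (hu : 0 ≤ u)
    (h : u < Θ z lam) : ThetaInv Θ lam u ≤ z :=
  csSup_le (hΘ.nonempty_setOf_le hlam hu) fun s hs =>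
    not_lt.1 fun hzs => (hΘ.2.1 z s lam hlam hzs.le).not_gt (hs.trans_lt h)

lemma monotoneOn_thetaInv (hΘ : IsThresholdFun Θ) (hlam : 0 ≤ lam) :
    MonotoneOn (ThetaInv Θ lam) (Set.Ici 0) := fun _ hu u' _ huu' =>
  csSup_le_csSup (hΘ.bddAbove_setOf_le hlam u') (hΘ.nonempty_setOf_le hlam hu)
    fun _ hs => le_trans hs huu'

lemma intervalIntegrable_thetaInv (hΘ : IsThresholdFun Θ) (hlam : 0 ≤ lam) {a b : ℝ}
    (ha : 0 ≤ a) (hb : 0 ≤ b) : IntervalIntegrable (ThetaInv Θ lam) volume a b :=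
  (hΘ.monotoneOn_thetaInv hlam).mono (fun _ hx => le_min ha hb |>.trans hx.1)
    |>.intervalIntegrable

lemma integral_thetaInv_sub_nonneg (hΘ : IsThresholdFun Θ) (hlam : 0 ≤ lam) {z r : ℝ}
    (hz : 0 ≤ z) (hr : 0 ≤ r) : 0 ≤ ∫ u in Θ z lam..r, (ThetaInv Θ lam u - z) := by
  have hθ : 0 ≤ Θ z lam := (hΘ.2.2.2 z lam hlam hz).1
  rcases le_or_gt (Θ z lam) r with hθr | hrθ
  · exact intervalIntegral.integral_nonneg hθr fun u hu =>
      sub_nonneg.2 (hΘ.le_thetaInv hlam hu.1)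
  · rw [intervalIntegral.integral_symm, neg_nonneg]
    calc ∫ u in r..Θ z lam, (ThetaInv Θ lam u - z)
        ≤ ∫ _ in r..Θ z lam, (0 : ℝ) :=
          intervalIntegral.integral_mono_on_of_le_Ioo hrθ.le
            ((hΘ.intervalIntegrable_thetaInv hlam hr hθ).sub intervalIntegrable_const)
            intervalIntegrable_const fun u hu =>
              sub_nonpos.2 (hΘ.thetaInv_le hlam (hr.trans hu.1.le) hu.2)
      _ = 0 := intervalIntegral.integral_zero

lemma half_sq_sub_add_PTheta_sub_eq (hΘ : IsThresholdFun Θ) (hlam : 0 ≤ lam) (z : ℝ) {a b : ℝ}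
    (ha : 0 ≤ a) (hb : 0 ≤ b) :
    (1/2 * (z - b) ^ 2 + PTheta Θ b lam) - (1/2 * (z - a) ^ 2 + PTheta Θ a lam)
      = ∫ u in a..b, (ThetaInv Θ lam u - z) := by
  have hint {c d : ℝ} (hc : 0 ≤ c) (hd : 0 ≤ d) :
      IntervalIntegrable (fun u => ThetaInv Θ lam u - u) volume c d :=
    (hΘ.intervalIntegrable_thetaInv hlam hc hd).sub intervalIntegral.intervalIntegrable_id
  have hPTheta : PTheta Θ b lam - PTheta Θ a lam = ∫ u in a..b, (ThetaInv Θ lam u - u) := by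
    rw [PTheta, PTheta, abs_of_nonneg ha, abs_of_nonneg hb]
    exact intervalIntegral.integral_interval_sub_left (hint le_rfl hb) (hint le_rfl ha)
  have hsplit : ∫ u in a..b, (ThetaInv Θ lam u - z)
      = (∫ u in a..b, (ThetaInv Θ lam u - u)) + ∫ u in a..b, (u - z) := by
    rw [← intervalIntegral.integral_add (hint ha hb)
      (intervalIntegral.intervalIntegrable_id.sub intervalIntegrable_const)]
    simp only [sub_add_sub_cancel]
  rw [hsplit, ← hPTheta, intervalIntegral.integral_sub intervalIntegral.intervalIntegrable_id
    intervalIntegrable_const, integral_id, intervalIntegral.integral_const, smul_eq_mul]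
  ring

lemma half_sq_sub_add_PTheta_le (hΘ : IsThresholdFun Θ) (hlam : 0 ≤ lam) {z r : ℝ}
    (hz : 0 ≤ z) (hr : 0 ≤ r) :
    1/2 * (z - Θ z lam) ^ 2 + PTheta Θ (Θ z lam) lam ≤ 1/2 * (z - r) ^ 2 + PTheta Θ r lam := by
  have h := hΘ.half_sq_sub_add_PTheta_sub_eq hlam z (hΘ.2.2.2 z lam hlam hz).1 hr
  linarith [hΘ.integral_thetaInv_sub_nonneg hlam hz hr]

end IsThresholdFun

namespace IsPenaltyFor

variable {Θ P : ℝ → ℝ → ℝ} {lam : ℝ}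

lemma apply_theta (hP : IsPenaltyFor Θ P) (hlam : 0 ≤ lam) (s : ℝ) :
    P (Θ s lam) lam = P 0 lam + PTheta Θ (Θ s lam) lam := by
  obtain ⟨q, -, hqΘ, hPq⟩ := hP
  linarith [hPq (Θ s lam) lam hlam, hqΘ s lam hlam]

lemma add_PTheta_le (hP : IsPenaltyFor Θ P) (hlam : 0 ≤ lam) (t : ℝ) :
    P 0 lam + PTheta Θ t lam ≤ P t lam := by
  obtain ⟨q, hq, -, hPq⟩ := hP
  linarith [hPq t lam hlam, hq t lam hlam]

end IsPenaltyFor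

section vnorm

variable {m : ℕ}

lemma vnorm_eq_norm (a : Fin m → ℝ) : vnorm a = ‖WithLp.toLp 2 a‖ := by
  simp [vnorm, EuclideanSpace.norm_eq]

lemma vnorm_nonneg (a : Fin m → ℝ) : 0 ≤ vnorm a :=
  Real.sqrt_nonneg _

lemma vnorm_smul (c : ℝ) (a : Fin m → ℝ) : vnorm (c • a) = |c| * vnorm a := by
  rw [vnorm_eq_norm, vnorm_eq_norm, WithLp.toLp_smul, norm_smul, Real.norm_eq_abs]

lemma sum_sq_sub_eq_sq_vnorm (a b : Fin m → ℝ) : ∑ j, (a j - b j) ^ 2 = vnorm (a - b) ^ 2 :=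
  (Real.sq_sqrt (Finset.sum_nonneg fun _ _ => sq_nonneg _)).symm

lemma sq_vnorm_sub_vnorm_le (a b : Fin m → ℝ) : (vnorm a - vnorm b) ^ 2 ≤ ∑ j, (a j - b j) ^ 2 := by
  rw [sum_sq_sub_eq_sq_vnorm, ← sq_abs, vnorm_eq_norm, vnorm_eq_norm, vnorm_eq_norm,
    WithLp.toLp_sub]
  exact pow_le_pow_left₀ (abs_nonneg _) (abs_norm_sub_norm_le _ _) 2

end vnorm

section vecTheta

variable {Θ : ℝ → ℝ → ℝ} {lam : ℝ} {m : ℕ}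

lemma vecTheta_eq_smul (a : Fin m → ℝ) :
    vecTheta Θ lam a = (Θ (vnorm a) lam / vnorm a) • a := by
  by_cases ha : a = 0 <;> simp [vecTheta, ha]

lemma div_vnorm_mul_vnorm (hΘ : IsThresholdFun Θ) (hlam : 0 ≤ lam) (a : Fin m → ℝ) :
    Θ (vnorm a) lam / vnorm a * vnorm a = Θ (vnorm a) lam :=
  div_mul_cancel_of_imp fun h => h ▸ hΘ.map_zero hlam

lemma vnorm_vecTheta (hΘ : IsThresholdFun Θ) (hlam : 0 ≤ lam) (a : Fin m → ℝ) :
    vnorm (vecTheta Θ lam a) = Θ (vnorm a) lam := by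
  have hθ := (hΘ.2.2.2 (vnorm a) lam hlam (vnorm_nonneg a)).1
  rw [vecTheta_eq_smul, vnorm_smul, abs_of_nonneg (div_nonneg hθ (vnorm_nonneg a)),
    div_vnorm_mul_vnorm hΘ hlam]

lemma sum_sq_sub_vecTheta (hΘ : IsThresholdFun Θ) (hlam : 0 ≤ lam) (a : Fin m → ℝ) :
    ∑ j, (a j - vecTheta Θ lam a j) ^ 2 = (vnorm a - Θ (vnorm a) lam) ^ 2 := by
  have hθ := hΘ.2.2.2 (vnorm a) lam hlam (vnorm_nonneg a)
  have hle : Θ (vnorm a) lam / vnorm a ≤ 1 := div_le_one_of_le₀ hθ.2 (vnorm_nonneg a)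
  have hsub : a - (Θ (vnorm a) lam / vnorm a) • a = (1 - Θ (vnorm a) lam / vnorm a) • a := by
    rw [sub_smul, one_smul]
  rw [sum_sq_sub_eq_sq_vnorm, vecTheta_eq_smul, hsub, vnorm_smul,
    abs_of_nonneg (sub_nonneg.2 hle), sub_mul, one_mul, div_vnorm_mul_vnorm hΘ hlam]

end vecTheta

/-- Lemma 1: `β̂ = vecΘ(y;λ)` is a global minimizer of
`β ↦ ½‖y - β‖₂² + P(‖β‖₂;λ)` for any penalty `P` associated with `Θ`. -/
theorem vec_thresholding_global_min (Θ P : ℝ → ℝ → ℝ)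
    (hΘ : IsThresholdFun Θ) (hP : IsPenaltyFor Θ P) (lam : ℝ) (hlam : 0 ≤ lam)
    {n : ℕ} (y : Fin n → ℝ) :
    ∀ β : Fin n → ℝ,
      (1/2) * (∑ j, (y j - vecTheta Θ lam y j) ^ 2) + P (vnorm (vecTheta Θ lam y)) lam
        ≤ (1/2) * (∑ j, (y j - β j) ^ 2) + P (vnorm β) lam := by
  intro β
  rw [sum_sq_sub_vecTheta hΘ hlam, vnorm_vecTheta hΘ hlam, hP.apply_theta hlam]
  have hscalar := hΘ.half_sq_sub_add_PTheta_le hlam (vnorm_nonneg y) (vnorm_nonneg β)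
  linarith [sq_vnorm_sub_vnorm_le y β, hP.add_PTheta_le hlam (vnorm β)]

end RRRStmt
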